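/- arXiv:1902.03635 — 7 statements merged into one kernel-verified Lean document; each statement's English description precedes it below -/
import Mathlib

section
/- Let F : X × Y → ℝ ∪ {∞} be a proper closed convex function with f(x) = inf_y F(x,y). Suppose there exists ū such that f(ū) ∈ ℝ and Y(ū) = argmin_y F(ū,y) is nonempty and compact. Then F is level-bounded in y locally uniformly in x; i.e., for every x₀ ∈ X and β ∈ ℝ, the set {(x,y) : ‖x − x₀‖ ≤ 1, F(x,y) ≤ β} is bounded. -/
open Filter Topology Bornology

/-- Convexity for an extended-real-valued function. -/
def ERealConvexOn {E : Type*} [AddCommGroup E] [Module ℝ E] (F : E → EReal) : Prop :=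
  ∀ x y : E, ∀ a b : ℝ, 0 ≤ a → 0 ≤ b → a + b = 1 →
    F (a • x + b • y) ≤ (a : EReal) * F x + (b : EReal) * F y

/-- a proper closed convex function with a nonempty compact argmin slice is
level-bounded in `y` locally uniformly in `x`. -/
theorem stmt2 {X Y : Type*}
    [NormedAddCommGroup X] [InnerProductSpace ℝ X] [FiniteDimensional ℝ X]
    [NormedAddCommGroup Y] [InnerProductSpace ℝ Y] [FiniteDimensional ℝ Y]
    (F : X × Y → EReal)
    (hproper : (∃ z, F z ≠ ⊤) ∧ ∀ z, F z ≠ ⊥)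
    (hlsc : LowerSemicontinuous F)
    (hconv : ERealConvexOn F)
    (ub : X) (r : ℝ) (hfin : (⨅ y, F (ub, y)) = (r : EReal))
    (hne : {y : Y | F (ub, y) = ⨅ y', F (ub, y')}.Nonempty)
    (hcpt : IsCompact {y : Y | F (ub, y) = ⨅ y', F (ub, y')}) :
    ∀ (x₀ : X) (β : ℝ),
      IsBounded {p : X × Y | ‖p.1 - x₀‖ ≤ 1 ∧ F p ≤ (β : EReal)} := by
  intro x₀ β
  by_contra hub
  obtain ⟨ybar, hybar⟩ := hne
  set z₀ : X × Y := (ub, ybar) with hz₀def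
  have hFz₀ : F z₀ = (r : EReal) := by
    simp only [Set.mem_setOf_eq] at hybar
    rw [hz₀def, hybar, hfin]
  -- extract an unbounded sequence in the level set
  rw [isBounded_iff_forall_norm_le] at hub
  push_neg at hub
  have hseq : ∀ n : ℕ, ∃ z : X × Y, (‖z.1 - x₀‖ ≤ 1 ∧ F z ≤ (β : EReal)) ∧ (n : ℝ) < ‖z - z₀‖ := by
    intro n
    obtain ⟨z, hz, hz'⟩ := hub ((n : ℝ) + ‖z₀‖)
    refine ⟨z, hz, ?_⟩
    have : ‖z‖ - ‖z₀‖ ≤ ‖z - z₀‖ := norm_sub_norm_le z z₀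
    linarith
  choose z hzmem hznorm using hseq
  set tn : ℕ → ℝ := fun n => ‖z n - z₀‖ with htn
  have htnpos : ∀ n, 0 < tn n := fun n =>
    lt_of_le_of_lt (Nat.cast_nonneg n) (hznorm n)
  set u : ℕ → X × Y := fun n => (tn n)⁻¹ • (z n - z₀) with hu
  have hmem : ∀ n, u n ∈ Metric.sphere (0 : X × Y) 1 := by
    intro n
    rw [mem_sphere_zero_iff_norm, hu]
    simp only [norm_smul, norm_inv, Real.norm_eq_abs,
      abs_of_pos (htnpos n)]
    exact inv_mul_cancel₀ (htnpos n).ne'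
  obtain ⟨d, hdmem, φ, hφ, hφt⟩ :=
    (isCompact_sphere (0 : X × Y) 1).tendsto_subseq hmem
  -- tn ∘ φ tends to infinity
  have htninf : Tendsto (fun k => tn (φ k)) atTop atTop := by
    have hb : ∀ k : ℕ, (k : ℝ) ≤ tn (φ k) := fun k =>
      le_trans (Nat.cast_le.2 hφ.le_apply) (hznorm (φ k)).le
    exact tendsto_atTop_mono hb tendsto_natCast_atTop_atTop
  -- first component of d is zero
  have hd1 : d.1 = 0 := by
    have h1 : Tendsto (fun k => (u (φ k)).1) atTop (𝓝 d.1) :=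
      (continuous_fst.tendsto d).comp hφt
    have hbound : ∀ k, ‖(u (φ k)).1‖ ≤ (1 + ‖x₀ - ub‖) / tn (φ k) := by
      intro k
      have : ‖(z (φ k)).1 - ub‖ ≤ 1 + ‖x₀ - ub‖ := by
        have h3 := (hzmem (φ k)).1
        calc ‖(z (φ k)).1 - ub‖ ≤ ‖(z (φ k)).1 - x₀‖ + ‖x₀ - ub‖ := norm_sub_le_norm_sub_add_norm_sub _ _ _
          _ ≤ 1 + ‖x₀ - ub‖ := by linarith
      have h4 : (u (φ k)).1 = (tn (φ k))⁻¹ • ((z (φ k)).1 - ub) := rfl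
      rw [h4, norm_smul, norm_inv, Real.norm_eq_abs, abs_of_pos (htnpos (φ k)), div_eq_inv_mul]
      exact mul_le_mul_of_nonneg_left this (inv_nonneg.2 (htnpos (φ k)).le)
    have h0 : Tendsto (fun k => (u (φ k)).1) atTop (𝓝 (0 : X)) := by
      rw [tendsto_zero_iff_norm_tendsto_zero]
      have hlim : Tendsto (fun k => (1 + ‖x₀ - ub‖) / tn (φ k)) atTop (𝓝 0) := by
        simpa [div_eq_mul_inv] using
          (htninf.inv_tendsto_atTop).const_mul (1 + ‖x₀ - ub‖)
      exact squeeze_zero (fun k => norm_nonneg _) hbound hlim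
    exact tendsto_nhds_unique h1 h0
  have hd2 : ‖d.2‖ = 1 := by
    have := mem_sphere_zero_iff_norm.1 hdmem
    rw [Prod.norm_def, hd1, norm_zero] at this
    simpa [max_eq_right (norm_nonneg d.2)] using this
  -- key claim
  have key : ∀ t : ℝ, 0 < t → F (ub, ybar + t • d.2) ≤ (r : EReal) := by
    intro t ht
    set p : X × Y := z₀ + t • d with hp
    have hpeq : p = (ub, ybar + t • d.2) := by
      rw [hp, hz₀def]
      ext
      · simp [hd1]
      · simp
    rw [← hpeq]
    by_contra hcon
    push_neg at hcon
    obtain ⟨c, hrc, hcp⟩ := EReal.exists_between_coe_real hcon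
    have hrc' : r < c := EReal.coe_lt_coe_iff.1 hrc
    -- w k → p
    set w : ℕ → X × Y := fun k => z₀ + t • u (φ k) with hw
    have hwt : Tendsto w atTop (𝓝 p) := by
      rw [hp]
      exact tendsto_const_nhds.add (hφt.const_smul t)
    have hev1 : ∀ᶠ k in atTop, (c : EReal) < F (w k) :=
      hwt.eventually (hlsc p (c : EReal) hcp)
    -- convexity bound
    have hev2 : ∀ᶠ k in atTop, t ≤ tn (φ k) := htninf.eventually_ge_atTop t
    have hbd : ∀ k, t ≤ tn (φ k) →
        F (w k) ≤ (((1 - t / tn (φ k)) * r + (t / tn (φ k)) * β : ℝ) : EReal) := by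
      intro k hk
      set lam : ℝ := t / tn (φ k) with hlam
      have hlam0 : 0 ≤ lam := div_nonneg ht.le (htnpos (φ k)).le
      have hlam1 : lam ≤ 1 := (div_le_one (htnpos (φ k))).2 hk
      have hwk : w k = (1 - lam) • z₀ + lam • z (φ k) := by
        rw [hw, hu, hlam]
        simp only
        rw [smul_smul, ← div_eq_mul_inv]
        module
      have hc := hconv z₀ (z (φ k)) (1 - lam) lam (by linarith) hlam0 (by ring)
      rw [← hwk] at hc
      -- F (z (φ k)) is a real number ≤ β
      have hFz : F (z (φ k)) ≤ (β : EReal) := (hzmem (φ k)).2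
      have hnb : F (z (φ k)) ≠ ⊥ := hproper.2 _
      have hnt : F (z (φ k)) ≠ ⊤ := ne_top_of_le_ne_top (EReal.coe_ne_top β) hFz
      set s : ℝ := (F (z (φ k))).toReal with hs
      have hFs : F (z (φ k)) = (s : EReal) := (EReal.coe_toReal hnt hnb).symm
      have hsβ : s ≤ β := by
        rw [hFs] at hFz; exact_mod_cast hFz
      calc F (w k) ≤ ((1 - lam : ℝ) : EReal) * F z₀ + (lam : EReal) * F (z (φ k)) := hc
        _ = (((1 - lam) * r + lam * s : ℝ) : EReal) := by
            rw [hFz₀, hFs]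
            push_cast
            rfl
        _ ≤ (((1 - lam) * r + lam * β : ℝ) : EReal) := by
            apply EReal.coe_le_coe_iff.2
            have : lam * s ≤ lam * β := mul_le_mul_of_nonneg_left hsβ hlam0
            linarith
    -- the real bound tends to r, so eventually < c
    have hlamlim : Tendsto (fun k => t / tn (φ k)) atTop (𝓝 0) := by
      simpa [div_eq_mul_inv] using (htninf.inv_tendsto_atTop).const_mul t
    have hrhs : Tendsto (fun k => (1 - t / tn (φ k)) * r + (t / tn (φ k)) * β) atTop (𝓝 r) := by
      have h := (((tendsto_const_nhds (α := ℕ) (x := (1:ℝ))).sub hlamlim).mul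
          (tendsto_const_nhds (x := r))).add (hlamlim.mul (tendsto_const_nhds (x := β)))
      simpa using h
    have hev3 : ∀ᶠ k in atTop, (1 - t / tn (φ k)) * r + (t / tn (φ k)) * β < c :=
      hrhs.eventually_lt_const hrc'
    obtain ⟨k, h1, h2, h3⟩ := (hev1.and (hev2.and hev3)).exists
    have h4 := lt_of_lt_of_le h1 (hbd k h2)
    exact lt_irrefl _ (lt_of_lt_of_le h4 (EReal.coe_le_coe_iff.2 h3.le))
  -- membership in argmin for all t > 0
  have hmemA : ∀ t : ℝ, 0 < t → (ybar + t • d.2) ∈ {y : Y | F (ub, y) = ⨅ y', F (ub, y')} := by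
    intro t ht
    have h1 : (⨅ y', F (ub, y')) ≤ F (ub, ybar + t • d.2) := iInf_le _ _
    have h2 : F (ub, ybar + t • d.2) ≤ ⨅ y', F (ub, y') := by
      rw [hfin]; exact key t ht
    exact le_antisymm h2 h1
  obtain ⟨C, hC⟩ := isBounded_iff_forall_norm_le.1 hcpt.isBounded
  have hCybar : ‖ybar‖ ≤ C := hC _ hybar
  set t : ℝ := C + ‖ybar‖ + 1 with htdef
  have ht : 0 < t := by have := norm_nonneg ybar; linarith
  have hy : ‖ybar + t • d.2‖ ≤ C := hC _ (hmemA t ht)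
  have : t = ‖t • d.2‖ := by
    rw [norm_smul, Real.norm_eq_abs, abs_of_pos ht, hd2, mul_one]
  have htri : ‖t • d.2‖ ≤ ‖ybar + t • d.2‖ + ‖ybar‖ := by
    calc ‖t • d.2‖ = ‖(ybar + t • d.2) - ybar‖ := by congr 1; abel
      _ ≤ ‖ybar + t • d.2‖ + ‖ybar‖ := norm_sub_le _ _
  rw [← this] at htri
  linarith
end

section
/- Let f_i : X → ℝ ∪ {∞}, 1 ≤ i ≤ m, be proper closed functions and define f = min_{1≤i≤m} f_i. Let x̄ be such that ∂f(x̄) ≠ ∅ and, for each i in the active index set I(x̄) = {i : f_i(x̄) = f(x̄)}, ∂f_i(x̄) ≠ ∅ and f_i satisfies the KL property at x̄ with exponent α_i ∈ [0,1). Then f satisfies the KL property at x̄ with exponent α = max{α_i : i ∈ I(x̄)}. -/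
open Filter Topology

variable {E : Type*} [NormedAddCommGroup E] [InnerProductSpace ℝ E] [FiniteDimensional ℝ E]

/-- `ζ` is a regular (Fréchet) subgradient of `f` at `x`. -/
def HasRegSubgradAt (f : E → EReal) (x ζ : E) : Prop :=
  ∃ r : ℝ, f x = (r : EReal) ∧ ∀ ε : ℝ, 0 < ε →
    ∀ᶠ z in 𝓝[≠] x, ((r + inner ℝ ζ (z - x) - ε * ‖z - x‖ : ℝ) : EReal) ≤ f z

/-- The limiting (Mordukhovich) subdifferential of `f` at `x`. -/
def limSubdiff (f : E → EReal) (x : E) : Set E :=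
  {ζ | ∃ (xk : ℕ → E) (ζk : ℕ → E),
    Tendsto xk atTop (𝓝 x) ∧ Tendsto (fun k => f (xk k)) atTop (𝓝 (f x)) ∧
    Tendsto ζk atTop (𝓝 ζ) ∧ ∀ k, HasRegSubgradAt f (xk k) (ζk k)}

/-- `h` satisfies the KL property at `x0` with exponent `α`:
`dist(0, ∂h(x)) ≥ c (h(x) - h(x0))^α` near `x0` in the relevant range. -/
def KLExpAt (h : E → EReal) (x0 : E) (α : ℝ) : Prop :=
  ∃ c > (0 : ℝ), ∃ a > (0 : ℝ), ∃ ε > (0 : ℝ), ∀ x : E, ‖x - x0‖ < ε →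
    h x0 < h x → h x < h x0 + (a : EReal) →
    ENNReal.ofReal (c * ((h x - h x0).toReal) ^ α) ≤ Metric.infEDist 0 (limSubdiff h x)


/-! The KL inequality of `min fᵢ` at `x` is inherited from one `fᵢ` that is active at `x` and whose
limiting subdifferential contains the given subgradient of the minimum: a sequence of regular
subgradients of the minimum has a subsequence along which a single `fᵢ` realises the minimum, and
lower semicontinuity makes that `fᵢ` active at the limit. Indices inactive at `x̄` stay strictly
above `min fᵢ (x̄)` nearby, so for `x` close to `x̄` with a small excess `f(x) - f(x̄)` the index is
active at `x̄` as well. Finitely many constants are then combined by taking minima, and on an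
excess below `1` a larger exponent only weakens the inequality. -/

section Semicontinuity

variable {X : Type*} [TopologicalSpace X]

lemma LowerSemicontinuous.le_of_tendsto {γ : Type*} [LinearOrder γ] [TopologicalSpace γ]
    [OrderTopology γ] [DenselyOrdered γ] {g : X → γ} (hg : LowerSemicontinuous g)
    {ι : Type*} {l : Filter ι} [l.NeBot] {u : ι → X} {x : X} {L : γ}
    (hu : Tendsto u l (𝓝 x)) (hgu : Tendsto (g ∘ u) l (𝓝 L)) : g x ≤ L :=
  le_of_forall_lt_imp_le_of_dense fun y hy =>
    ge_of_tendsto hgu ((hu.eventually (hg x y hy)).mono fun _ => le_of_lt)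

lemma LowerSemicontinuous.exists_pos_eventually_lt {g : X → EReal} (hg : LowerSemicontinuous g)
    {x0 : X} {r : ℝ} (hr : (r : EReal) < g x0) :
    ∃ a > (0 : ℝ), ∀ᶠ x in 𝓝 x0, (r : EReal) + a < g x := by
  obtain ⟨y, hry, hy⟩ := EReal.lt_iff_exists_real_btwn.1 hr
  refine ⟨y - r, sub_pos.2 (EReal.coe_lt_coe_iff.1 hry), ?_⟩
  filter_upwards [hg x0 y hy] with x hx
  rwa [← EReal.coe_add, add_sub_cancel]

lemma exists_pos_eventually_active {ι : Type*} [Finite ι] [Nonempty ι] {f : ι → X → EReal}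
    (hlsc : ∀ i, LowerSemicontinuous (f i)) {x0 : X} {r : ℝ} (hr : ⨅ j, f j x0 = r) :
    ∃ a > (0 : ℝ), ∀ᶠ x in 𝓝 x0, ∀ i, f i x < (r : EReal) + a → f i x0 = r := by
  have hactive : ∀ i, ∃ a > (0 : ℝ), ∀ᶠ x in 𝓝 x0, f i x < (r : EReal) + a → f i x0 = r := by
    intro i
    rcases (hr ▸ iInf_le (fun j => f j x0) i).eq_or_lt with hi | hi
    · exact ⟨1, one_pos, .of_forall fun _ _ => hi.symm⟩
    · obtain ⟨a, ha, hev⟩ := (hlsc i).exists_pos_eventually_lt hi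
      exact ⟨a, ha, hev.mono fun x hx hlt => absurd hx (not_lt.2 hlt.le)⟩
  choose a ha hev using hactive
  obtain ⟨i0, hi0⟩ := Finite.exists_min a
  refine ⟨a i0, ha i0, ?_⟩
  filter_upwards [eventually_all.2 hev] with x hx i hlt
  exact hx i (hlt.trans_le (add_le_add_right (EReal.coe_le_coe_iff.2 (hi0 i)) _))

end Semicontinuity

section Subdifferential

omit [FiniteDimensional ℝ E]

lemma HasRegSubgradAt.of_le {g h : E → EReal} {x ζ : E} (hle : g ≤ h) (hx : h x = g x)
    (hg : HasRegSubgradAt g x ζ) : HasRegSubgradAt h x ζ := by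
  obtain ⟨r, hr, hlow⟩ := hg
  exact ⟨r, hx.trans hr, fun ε hε => (hlow ε hε).mono fun z hz => hz.trans (hle z)⟩

lemma exists_mem_limSubdiff_of_mem_limSubdiff_iInf {ι : Type*} [Finite ι] [Nonempty ι]
    {f : ι → E → EReal} (hlsc : ∀ i, LowerSemicontinuous (f i)) {x ζ : E}
    (hζ : ζ ∈ limSubdiff (fun y => ⨅ i, f i y) x) :
    ∃ i, f i x = ⨅ j, f j x ∧ ζ ∈ limSubdiff (f i) x := by
  obtain ⟨xk, ζk, hxk, hFxk, hζk, hreg⟩ := hζ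
  obtain ⟨i, hi⟩ : ∃ i, ∃ᶠ k in atTop, f i (xk k) = ⨅ j, f j (xk k) :=
    frequently_exists.1 (.of_forall fun _ => exists_eq_ciInf_of_finite)
  obtain ⟨φ, hφ, hφi⟩ := extraction_of_frequently_atTop hi
  have hxφ : Tendsto (xk ∘ φ) atTop (𝓝 x) := hxk.comp hφ.tendsto_atTop
  have hfiφ : Tendsto (f i ∘ xk ∘ φ) atTop (𝓝 (⨅ j, f j x)) :=
    (hFxk.comp hφ.tendsto_atTop).congr fun n => (hφi n).symm
  have hix : f i x = ⨅ j, f j x :=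
    le_antisymm ((hlsc i).le_of_tendsto hxφ hfiφ) (iInf_le (fun j => f j x) i)
  refine ⟨i, hix, xk ∘ φ, ζk ∘ φ, hxφ, hix ▸ hfiφ, hζk.comp hφ.tendsto_atTop, fun n => ?_⟩
  exact (hreg (φ n)).of_le (fun y => iInf_le (fun j => f j y) i) (hφi n)

lemma EReal.toReal_sub_mem_Ioo {y z : EReal} {a : ℝ} (hzy : z < y) (hy : y < z + a) :
    (y - z).toReal ∈ Set.Ioo 0 a := by
  induction z using EReal.rec with
  | bot => simp at hy
  | top => simp at hzy
  | coe z =>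
    induction y using EReal.rec with
    | bot => simp at hzy
    | top => exact absurd hy (by simp [← EReal.coe_add])
    | coe y =>
      rw [← EReal.coe_sub, EReal.toReal_coe]
      norm_cast at hzy hy
      constructor <;> linarith

lemma klExpAt_iff_eventually {h : E → EReal} {x0 : E} {α : ℝ} :
    KLExpAt h x0 α ↔ ∃ c > (0 : ℝ), ∃ a > (0 : ℝ), ∀ᶠ x in 𝓝 x0, h x0 < h x →
      h x < h x0 + (a : EReal) →
      ENNReal.ofReal (c * ((h x - h x0).toReal) ^ α) ≤ Metric.infEDist 0 (limSubdiff h x) := by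
  simp only [KLExpAt, Metric.eventually_nhds_iff, dist_eq_norm]

lemma klExpAt_of_eq_top {h : E → EReal} {x0 : E} {α : ℝ} (htop : h x0 = ⊤) : KLExpAt h x0 α :=
  ⟨1, one_pos, 1, one_pos, 1, one_pos, fun _ _ hlt => absurd hlt (htop ▸ not_top_lt)⟩

lemma klExpAt_of_eq_bot {h : E → EReal} {x0 : E} {α : ℝ} (hbot : h x0 = ⊥) : KLExpAt h x0 α :=
  ⟨1, one_pos, 1, one_pos, 1, one_pos, fun _ _ _ hlt => absurd hlt (by simp [hbot])⟩

lemma KLExpAt.mono_exponent {h : E → EReal} {x0 : E} {α β : ℝ} (hKL : KLExpAt h x0 α)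
    (hαβ : α ≤ β) : KLExpAt h x0 β := by
  obtain ⟨c, hc, a, ha, ε, hε, hbound⟩ := hKL
  refine ⟨c, hc, min a 1, by positivity, ε, hε, fun x hx hlt hlt' => ?_⟩
  obtain ⟨hs0, hs1⟩ := EReal.toReal_sub_mem_Ioo hlt hlt'
  refine le_trans (ENNReal.ofReal_le_ofReal ?_) (hbound x hx hlt (hlt'.trans_le ?_))
  · gcongr c * ?_
    exact Real.rpow_le_rpow_of_exponent_ge hs0 (hs1.le.trans (min_le_right _ _)) hαβ
  · exact add_le_add_right (EReal.coe_le_coe_iff.2 (min_le_left _ _)) _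

lemma klExpAt_iInf_of_eq_coe {ι : Type*} [Finite ι] {f : ι → E → EReal}
    (hlsc : ∀ i, LowerSemicontinuous (f i)) {x0 : E} {α r : ℝ} (hF : ⨅ i, f i x0 = r)
    (hKL : ∀ i, f i x0 = ⨅ j, f j x0 → KLExpAt (f i) x0 α) :
    KLExpAt (fun x => ⨅ i, f i x) x0 α := by
  have : Nonempty ι := not_isEmpty_iff.1 fun _ => by
    rw [iInf_of_empty] at hF
    exact EReal.top_ne_coe r hF
  obtain ⟨a₀, ha₀, hloc⟩ := exists_pos_eventually_active hlsc hF
  have hKLguarded : ∀ i, ∃ c > (0 : ℝ), ∃ a > (0 : ℝ), ∀ᶠ x in 𝓝 x0, f i x0 = r →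
      f i x0 < f i x → f i x < f i x0 + (a : EReal) →
      ENNReal.ofReal (c * ((f i x - f i x0).toReal) ^ α) ≤
        Metric.infEDist 0 (limSubdiff (f i) x) := by
    intro i
    by_cases hi : f i x0 = r
    · obtain ⟨c, hc, a, ha, hev⟩ := klExpAt_iff_eventually.1 (hKL i (hi.trans hF.symm))
      exact ⟨c, hc, a, ha, hev.mono fun _ hx _ => hx⟩
    · exact ⟨1, one_pos, 1, one_pos, .of_forall fun _ hi' => absurd hi' hi⟩
  choose c hc a ha hev using hKLguarded
  obtain ⟨ic, hic⟩ := Finite.exists_min c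
  obtain ⟨ia, hia⟩ := Finite.exists_min a
  refine klExpAt_iff_eventually.2 ⟨c ic, hc ic, min a₀ (a ia), lt_min ha₀ (ha ia), ?_⟩
  filter_upwards [hloc, eventually_all.2 hev] with x hlocx hKLx hlt hlt'
  simp only [hF] at hlt hlt' ⊢
  obtain ⟨hs0, -⟩ := EReal.toReal_sub_mem_Ioo hlt hlt'
  rw [Metric.le_infEDist]
  intro ζ hζ
  obtain ⟨i, hix, hζi⟩ := exists_mem_limSubdiff_of_mem_limSubdiff_iInf hlsc hζ
  have hi : f i x0 = r := hlocx i (hix ▸ hlt'.trans_le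
    (add_le_add_right (EReal.coe_le_coe_iff.2 (min_le_left _ _)) _))
  have hbound := hKLx i hi (by rwa [hi, hix]) (by
    rw [hi, hix]
    exact hlt'.trans_le (add_le_add_right (EReal.coe_le_coe_iff.2
      ((min_le_right _ _).trans (hia i))) _))
  rw [hi, hix] at hbound
  refine le_trans (ENNReal.ofReal_le_ofReal ?_)
    (hbound.trans (Metric.infEDist_le_edist_of_mem hζi))
  gcongr
  exact hic i

theorem klExpAt_iInf {ι : Type*} [Finite ι] {f : ι → E → EReal}
    (hlsc : ∀ i, LowerSemicontinuous (f i)) {x0 : E} {α : ℝ}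
    (hKL : ∀ i, f i x0 = ⨅ j, f j x0 → KLExpAt (f i) x0 α) :
    KLExpAt (fun x => ⨅ i, f i x) x0 α := by
  induction hF : ⨅ i, f i x0 using EReal.rec with
  | bot => exact klExpAt_of_eq_bot hF
  | top => exact klExpAt_of_eq_top hF
  | coe r => exact klExpAt_iInf_of_eq_coe hlsc hF hKL

end Subdifferential

theorem stmt6_general (m : ℕ) (f : Fin m → E → EReal)
    (hlsc : ∀ i, LowerSemicontinuous (f i))
    (xb : E) (α : Fin m → ℝ)
    (hactive : ∀ i, f i xb = (⨅ j, f j xb) →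
      (limSubdiff (f i) xb).Nonempty ∧ KLExpAt (f i) xb (α i)) :
    KLExpAt (fun x => ⨅ i, f i x) xb
      (sSup (α '' {i | f i xb = ⨅ j, f j xb})) :=
  klExpAt_iInf hlsc fun i hi => (hactive i hi).2.mono_exponent
    (le_csSup (Set.toFinite _).bddAbove (Set.mem_image_of_mem α hi))

/-- KL exponent of the minimum of finitely many proper closed functions. -/
theorem stmt6 (m : ℕ) (hm : 0 < m) (f : Fin m → E → EReal)
    (hproper : ∀ i, (∃ z, f i z ≠ ⊤) ∧ ∀ z, f i z ≠ ⊥)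
    (hlsc : ∀ i, LowerSemicontinuous (f i))
    (xb : E) (α : Fin m → ℝ) (hα : ∀ i, 0 ≤ α i ∧ α i < 1)
    (hxb : (limSubdiff (fun x => ⨅ i, f i x) xb).Nonempty)
    (hactive : ∀ i, f i xb = (⨅ j, f j xb) →
      (limSubdiff (f i) xb).Nonempty ∧ KLExpAt (f i) xb (α i)) :
    KLExpAt (fun x => ⨅ i, f i x) xb
      (sSup (α '' {i | f i xb = ⨅ j, f j xb})) :=
  stmt6_general m f hlsc xb α hactive
end

section
/- Let h be a proper closed convex function on a finite-dimensional Hilbert space, let x̄ be a minimizer of h, and suppose there exist a neighborhood U of x̄ and c > 0 such that dist(x, argmin h) ≤ c (h(x) − h(x̄))^{1/2} for all x ∈ U (quadratic growth / second-order error bound in the level set). Then h satisfies the KL property at x̄ with exponent 1/2; i.e., there exist c' > 0 and a neighborhood V of x̄ such that dist(0, ∂h(x)) ≥ c' (h(x) − h(x̄))^{1/2} for all x ∈ V with h(x) > h(x̄). -/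
/-!
For a subgradient `u` of `h` at `x` and any minimizer `z`, the subgradient inequality gives
`h x - min h ≤ ⟪u, x - z⟫ ≤ ‖u‖ ‖x - z‖`; taking the infimum over `z`,
`h x - min h ≤ ‖u‖ dist(x, argmin h)`. Combined with the error bound
`dist(x, argmin h) ≤ c √(h x - min h)` this yields `√(h x - min h) ≤ c ‖u‖`.
-/

open Filter Topology

lemma Metric.le_mul_infDist_of_forall_le_mul_dist {X : Type*} [PseudoMetricSpace X] {s : Set X}
    (hs : s.Nonempty) {x : X} {t n : ℝ} (hn : 0 ≤ n) (ht : ∀ z ∈ s, t ≤ n * dist x z) :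
    t ≤ n * Metric.infDist x s := by
  have : Nonempty s := hs.to_subtype
  rw [Metric.infDist_eq_iInf, Real.mul_iInf_of_nonneg hn]
  exact le_ciInf fun z => ht z z.2

section Subgradient

variable {H : Type*} [NormedAddCommGroup H] [InnerProductSpace ℝ H]

lemma toReal_sub_le_inner_of_subgradient {h : H → EReal} {x z u : H} {r : ℝ}
    (hu : ∀ w, h x + ((inner ℝ u (w - x) : ℝ) : EReal) ≤ h w) (hz : h z = r)
    (hzx : h z ≤ h x) :
    (h x - h z).toReal ≤ inner ℝ u (x - z) := by
  rw [hz] at hzx ⊢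
  have hx_ne_bot : h x ≠ ⊥ := ne_bot_of_le_ne_bot (EReal.coe_ne_bot r) hzx
  by_cases hx_top : h x = ⊤
  · have hux := hu z
    rw [hx_top, EReal.top_add_coe, hz] at hux
    simp at hux
  lift h x to ℝ using ⟨hx_top, hx_ne_bot⟩ with a
  have hux : a + inner ℝ u (z - x) ≤ r := by exact_mod_cast hz ▸ hu z
  rw [← EReal.coe_sub, EReal.toReal_coe, ← neg_sub z x, inner_neg_right]
  linarith

lemma toReal_sub_le_norm_mul_infDist_argmin {h : H → EReal} {xb x u : H} {r : ℝ}
    (hmin : ∀ w, h xb ≤ h w) (hfin : h xb = r)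
    (hu : ∀ w, h x + ((inner ℝ u (w - x) : ℝ) : EReal) ≤ h w) :
    (h x - h xb).toReal ≤ ‖u‖ * Metric.infDist x {z : H | ∀ w, h z ≤ h w} := by
  refine Metric.le_mul_infDist_of_forall_le_mul_dist
    (s := {z : H | ∀ w, h z ≤ h w}) ⟨xb, hmin⟩ (norm_nonneg u) fun z hz => ?_
  have hz_eq : h z = h xb := le_antisymm (hz xb) (hmin z)
  calc (h x - h xb).toReal = (h x - h z).toReal := by rw [hz_eq]
    _ ≤ inner ℝ u (x - z) :=
      toReal_sub_le_inner_of_subgradient hu (hz_eq.trans hfin) (hz x)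
    _ ≤ ‖u‖ * dist x z := by rw [dist_eq_norm]; exact real_inner_le_norm u (x - z)

end Subgradient

lemma Real.inv_mul_sqrt_le_of_le_mul_of_le_mul_sqrt {t n d c : ℝ} (hc : 0 < c) (hn : 0 ≤ n)
    (ht : t ≤ n * d) (hd : d ≤ c * √t) : c⁻¹ * √t ≤ n := by
  rw [inv_mul_le_iff₀ hc]
  rcases le_or_gt t 0 with ht0 | ht0
  · rw [Real.sqrt_eq_zero'.2 ht0]; positivity
  have hsq : √t * √t ≤ c * n * √t :=
    calc √t * √t = t := Real.mul_self_sqrt ht0.le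
      _ ≤ n * d := ht
      _ ≤ n * (c * √t) := mul_le_mul_of_nonneg_left hd hn
      _ = c * n * √t := by ring
  exact le_of_mul_le_mul_right hsq (Real.sqrt_pos.2 ht0)

theorem stmt8_general {H : Type*}
    [NormedAddCommGroup H] [InnerProductSpace ℝ H]
    (h : H → EReal)
    (xb : H) (hmin : ∀ x, h xb ≤ h x) (r : ℝ) (hfin : h xb = (r : EReal))
    (c : ℝ) (hc : 0 < c) (U : Set H) (hU : U ∈ 𝓝 xb)
    (heb : ∀ x ∈ U,
      Metric.infDist x {z : H | ∀ w, h z ≤ h w} ≤ c * ((h x - h xb).toReal) ^ (1/2 : ℝ)) :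
    ∃ c' > (0 : ℝ), ∃ V ∈ 𝓝 xb, ∀ x ∈ V, h xb < h x →
      ENNReal.ofReal (c' * ((h x - h xb).toReal) ^ (1/2 : ℝ)) ≤
        Metric.infEDist 0 {u : H | ∀ z, h x + ((inner ℝ u (z - x) : ℝ) : EReal) ≤ h z} := by
  refine ⟨c⁻¹, inv_pos.2 hc, U, hU, fun x hxU _ => Metric.le_infEDist.2 fun u hu => ?_⟩
  rw [edist_comm, edist_zero_right, ← ofReal_norm, ← Real.sqrt_eq_rpow]
  refine ENNReal.ofReal_le_ofReal (Real.inv_mul_sqrt_le_of_le_mul_of_le_mul_sqrt hc (norm_nonneg u)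
    (toReal_sub_le_norm_mul_infDist_argmin hmin hfin hu) ?_)
  rw [Real.sqrt_eq_rpow]
  exact heb x hxU

/-- for a proper closed convex function, a quadratic-growth error bound at a
minimizer implies the KL property with exponent 1/2 there. -/
theorem stmt8 {H : Type*}
    [NormedAddCommGroup H] [InnerProductSpace ℝ H] [FiniteDimensional ℝ H]
    (h : H → EReal)
    (hproper : (∃ z, h z ≠ ⊤) ∧ ∀ z, h z ≠ ⊥)
    (hlsc : LowerSemicontinuous h)
    (hconv : ERealConvexOn h)
    (xb : H) (hmin : ∀ x, h xb ≤ h x) (r : ℝ) (hfin : h xb = (r : EReal))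
    (c : ℝ) (hc : 0 < c) (U : Set H) (hU : U ∈ 𝓝 xb)
    (heb : ∀ x ∈ U,
      Metric.infDist x {z : H | ∀ w, h z ≤ h w} ≤ c * ((h x - h xb).toReal) ^ (1/2 : ℝ)) :
    ∃ c' > (0 : ℝ), ∃ V ∈ 𝓝 xb, ∀ x ∈ V, h xb < h x →
      ENNReal.ofReal (c' * ((h x - h xb).toReal) ^ (1/2 : ℝ)) ≤
        Metric.infEDist 0 {u : H | ∀ z, h x + ((inner ℝ u (z - x) : ℝ) : EReal) ≤ h z} :=
  stmt8_general h xb hmin r hfin c hc U hU heb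
end

section
/- For any matrix X ∈ ℝ^{m×n}, the nuclear norm satisfies ‖X‖_* = (1/2) inf { tr(U) + tr(V) : U ∈ S^m, V ∈ S^n, and the block matrix [[U, X],[Xᵀ, V]] is positive semidefinite }, and the infimum is attained at U = P₊ Σ₊ P₊ᵀ and V = Q₊ Σ₊ Q₊ᵀ, where X = P₊ Σ₊ Q₊ᵀ is a reduced singular value decomposition of X. -/
/-!
The pair `(P Σ Pᵀ, Q Σ Qᵀ)` is feasible because its block matrix is `[P; Q] Σ [P; Q]ᵀ`, and its
value is `tr Σ`. For the lower bound, `Z = [[1, -P Qᵀ], [-Q Pᵀ, 1]]` is positive semidefinite: its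
Schur complement is the projection `1 - Q Qᵀ`. Hence every feasible `W = [[U, X], [Xᵀ, V]]` gives
`0 ≤ tr (W Z) = tr U + tr V - 2 tr (Pᵀ X Q) = tr U + tr V - 2 tr Σ`; `Z` is a dual certificate.
-/

open Matrix
open scoped MatrixOrder ComplexOrder

namespace Matrix

variable {𝕜 : Type*} [RCLike 𝕜] {l m n : Type*} [Fintype l] [Fintype m] [Fintype n]

lemma trace_fromBlocks {R : Type*} [AddCommMonoid R] (A : Matrix m m R) (B : Matrix m n R)
    (C : Matrix n m R) (D : Matrix n n R) :
    (fromBlocks A B C D).trace = A.trace + D.trace := by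
  simp [trace, Fintype.sum_sum_type]

lemma PosSemidef.trace_mul_nonneg [DecidableEq n] {A B : Matrix n n 𝕜}
    (hA : A.PosSemidef) (hB : B.PosSemidef) : 0 ≤ (A * B).trace := by
  -- `tr (A B) = tr (√A B √A)`
  have hsqrt : CFC.sqrt A * CFC.sqrt A = A := CFC.sqrt_mul_sqrt_self A hA.nonneg
  have hconj := hB.mul_mul_conjTranspose_same (CFC.sqrt A)
  rw [(CFC.sqrt_nonneg A).posSemidef.isHermitian.eq] at hconj
  simpa only [trace_mul_cycle, hsqrt] using hconj.trace_nonneg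

lemma posSemidef_one_sub_mul_conjTranspose [DecidableEq m] [DecidableEq n] {P : Matrix m n 𝕜}
    (hP : Pᴴ * P = 1) : (1 - P * Pᴴ).PosSemidef := by
  have hproj : IsStarProjection (P * Pᴴ) :=
    ⟨by rw [IsIdempotentElem, Matrix.mul_assoc, ← Matrix.mul_assoc Pᴴ P, hP, Matrix.one_mul],
      by simp [IsSelfAdjoint, star_eq_conjTranspose]⟩
  exact nonneg_iff_posSemidef.mp hproj.one_sub_nonneg

lemma posSemidef_fromBlocks_one_neg_mul_conjTranspose [DecidableEq l] [DecidableEq m]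
    [DecidableEq n] {P : Matrix m l 𝕜} {Q : Matrix n l 𝕜} (hP : Pᴴ * P = 1) (hQ : Qᴴ * Q = 1) :
    (fromBlocks 1 (-(P * Qᴴ)) (-(Q * Pᴴ)) 1).PosSemidef := by
  let : Invertible (1 : Matrix m m 𝕜) := invertibleOne
  have hB : -(Q * Pᴴ) = (-(P * Qᴴ))ᴴ := by simp
  rw [hB, PosDef.fromBlocks₁₁ (A := (1 : Matrix m m 𝕜)) _ _ PosDef.one]
  simp only [conjTranspose_neg, conjTranspose_mul, conjTranspose_conjTranspose, inv_one,
    Matrix.mul_one, Matrix.mul_neg, Matrix.neg_mul, neg_neg]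
  rw [Matrix.mul_assoc, ← Matrix.mul_assoc Pᴴ P, hP, Matrix.one_mul]
  exact posSemidef_one_sub_mul_conjTranspose hQ

lemma posSemidef_fromBlocks_mul_mul_conjTranspose {D : Matrix l l 𝕜} (hD : D.PosSemidef)
    (P : Matrix m l 𝕜) (Q : Matrix n l 𝕜) :
    (fromBlocks (P * D * Pᴴ) (P * D * Qᴴ) (Q * D * Pᴴ) (Q * D * Qᴴ)).PosSemidef := by
  simpa [conjTranspose_fromRows_eq_fromCols_conjTranspose] using
    hD.mul_mul_conjTranspose_same (fromRows P Q)

lemma two_mul_trace_le_of_posSemidef_fromBlocks [DecidableEq l] [DecidableEq m] [DecidableEq n]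
    {U : Matrix m m ℝ} {V : Matrix n n ℝ} {X : Matrix m n ℝ} {P : Matrix m l ℝ}
    {Q : Matrix n l ℝ} (hP : Pᵀ * P = 1) (hQ : Qᵀ * Q = 1)
    (hW : (fromBlocks U X Xᵀ V).PosSemidef) :
    2 * (Pᵀ * X * Q).trace ≤ U.trace + V.trace := by
  have hZ := posSemidef_fromBlocks_one_neg_mul_conjTranspose (P := P) (Q := Q)
    (by simpa using hP) (by simpa using hQ)
  have h := hW.trace_mul_nonneg hZ
  have hXQP : (X * (Q * Pᵀ)).trace = (Pᵀ * X * Q).trace := by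
    rw [← Matrix.mul_assoc, trace_mul_cycle]
  have hXPQ : (Xᵀ * (P * Qᵀ)).trace = (Pᵀ * X * Q).trace := by
    rw [← trace_transpose]
    simp only [transpose_mul, transpose_transpose, Matrix.mul_assoc]
    rw [trace_mul_comm, Matrix.mul_assoc]
  simp only [conjTranspose_eq_transpose_of_trivial, fromBlocks_multiply, Matrix.mul_neg,
    Matrix.mul_one, trace_fromBlocks, trace_add, trace_neg, hXQP, hXPQ] at h
  linarith

end Matrix

/-- SDP representation of the nuclear norm: for `X = P Σ Qᵀ` a reduced SVD,
`‖X‖_* = tr Σ` is the least value of `(1/2)(tr U + tr V)` over symmetric `U, V` with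
`[[U, X],[Xᵀ, V]] ⪰ 0`, attained at `(P Σ Pᵀ, Q Σ Qᵀ)`. -/
theorem stmt9 (m n r : ℕ)
    (P : Matrix (Fin m) (Fin r) ℝ) (Q : Matrix (Fin n) (Fin r) ℝ)
    (σ : Fin r → ℝ) (hσ : ∀ i, 0 < σ i)
    (hP : Pᵀ * P = 1) (hQ : Qᵀ * Q = 1)
    (X : Matrix (Fin m) (Fin n) ℝ)
    (hX : X = P * Matrix.diagonal σ * Qᵀ) :
    IsLeast {t : ℝ | ∃ (U : Matrix (Fin m) (Fin m) ℝ) (V : Matrix (Fin n) (Fin n) ℝ),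
        U.IsSymm ∧ V.IsSymm ∧ (Matrix.fromBlocks U X Xᵀ V).PosSemidef ∧
        t = (1/2) * (U.trace + V.trace)} (∑ i, σ i) ∧
    (Matrix.fromBlocks (P * Matrix.diagonal σ * Pᵀ) X Xᵀ
        (Q * Matrix.diagonal σ * Qᵀ)).PosSemidef ∧
    (1/2) * ((P * Matrix.diagonal σ * Pᵀ).trace + (Q * Matrix.diagonal σ * Qᵀ).trace) =
      ∑ i, σ i := by
  have hσD : (diagonal σ).PosSemidef := posSemidef_diagonal_iff.mpr fun i ↦ (hσ i).le
  have hW : (fromBlocks (P * diagonal σ * Pᵀ) X Xᵀ (Q * diagonal σ * Qᵀ)).PosSemidef := by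
    have hXt : Xᵀ = Q * diagonal σ * Pᵀ := by simp [hX, transpose_mul, Matrix.mul_assoc]
    rw [hXt, hX]
    simpa using posSemidef_fromBlocks_mul_mul_conjTranspose hσD P Q
  have hval :
      (1/2) * ((P * diagonal σ * Pᵀ).trace + (Q * diagonal σ * Qᵀ).trace) = ∑ i, σ i := by
    rw [trace_mul_cycle, hP, trace_mul_cycle, hQ, Matrix.one_mul, trace_diagonal]
    ring
  have hXQ : Pᵀ * X * Q = diagonal σ := by
    rw [hX, Matrix.mul_assoc, Matrix.mul_assoc, hQ, Matrix.mul_one, ← Matrix.mul_assoc, hP,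
      Matrix.one_mul]
  refine ⟨⟨⟨_, _, ?_, ?_, hW, hval.symm⟩, ?_⟩, hW, hval⟩
  · simp [IsSymm, transpose_mul, Matrix.mul_assoc]
  · simp [IsSymm, transpose_mul, Matrix.mul_assoc]
  · rintro t ⟨U, V, -, -, hUV, rfl⟩
    have h := two_mul_trace_le_of_posSemidef_fromBlocks hP hQ hUV
    rw [hXQ, trace_diagonal] at h
    linarith
end

section
/- Let X̄ ∈ ℝ^{m×n} have rank r with reduced SVD X̄ = P₊ Σ₊ Q₊ᵀ, and define Z̄ = [[P₊ Σ₊ P₊ᵀ, X̄],[X̄ᵀ, Q₊ Σ₊ Q₊ᵀ]] ∈ S^{m+n}. Then Z̄ is positive semidefinite of rank r, and among all pairs (U,V) with [[U, X̄],[X̄ᵀ, V]] ⪰ 0, the pair (P₊ Σ₊ P₊ᵀ, Q₊ Σ₊ Q₊ᵀ) is the unique minimizer of (1/2)(tr U + tr V). -/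
/-!
With `W = [P; Q]` we have `Z̄ = W Σ Wᵀ`, so `Z̄ ⪰ 0`, and since `W` has a left inverse and `Wᵀ` a
right inverse, `rank Z̄ = rank Σ = r`.

For optimality, compress `M = [[U, X̄], [X̄ᵀ, V]] ⪰ 0` by `G = [P; -Q]`: `Gᵀ M G = PᵀUP + QᵀVQ - 2Σ`
is positive semidefinite, and `tr U - tr (PᵀUP) = tr (E U E) ≥ 0` for the projection
`E = 1 - PPᵀ` (likewise for `V`). Summing, `tr U + tr V - 2 tr Σ` is a sum of three nonnegative
traces. At equality each vanishes; for `M ⪰ 0`, `tr (Gᵀ M G) = 0` forces `M G = 0`, i.e.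
`UP = PΣ` and `VQ = QΣ`, while `tr (E U E) = 0` forces `U = UPPᵀ`. Hence `U = PΣPᵀ`, and
likewise `V = QΣQᵀ`.
-/

open Matrix
open scoped ComplexOrder

namespace Matrix

variable {𝕜 : Type*} [RCLike 𝕜] {m n r : Type*} [Fintype r]

lemma fromRows_mul_mul_conjTranspose_fromRows {P : Matrix m r 𝕜} {Q : Matrix n r 𝕜}
    {D : Matrix r r 𝕜} (hD : Dᴴ = D) :
    fromRows P Q * D * (fromRows P Q)ᴴ =
      fromBlocks (P * D * Pᴴ) (P * D * Qᴴ) (P * D * Qᴴ)ᴴ (Q * D * Qᴴ) := by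
  rw [conjTranspose_fromRows_eq_fromCols_conjTranspose, fromRows_mul, fromRows_mul_fromCols]
  simp only [conjTranspose_mul, conjTranspose_conjTranspose, hD, Matrix.mul_assoc]

variable [Fintype m] [Fintype n]

theorem rank_mul_mul_of_mul_eq_one {K : Type*} [CommRing K] [StrongRankCondition K]
    {k l : Type*} [Fintype k] [Fintype l] [DecidableEq k] [DecidableEq l]
    {W : Matrix m k K} {D : Matrix k l K} {W' : Matrix l n K} {L : Matrix k m K}
    {R : Matrix n l K} (hL : L * W = 1) (hR : W' * R = 1) : (W * D * W').rank = D.rank := by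
  refine le_antisymm ((rank_mul_le_left _ _).trans (rank_mul_le_right _ _)) ?_
  calc D.rank = (L * (W * D * W') * R).rank := by
        simp only [← Matrix.mul_assoc, hL, Matrix.one_mul]
        rw [Matrix.mul_assoc, hR, Matrix.mul_one]
    _ ≤ (W * D * W').rank := (rank_mul_le_left _ _).trans (rank_mul_le_right _ _)

lemma PosSemidef.mul_eq_zero_of_trace_conjTranspose_mul_mul_eq_zero {M : Matrix m m 𝕜}
    (hM : M.PosSemidef) {G : Matrix m r 𝕜} (h : (Gᴴ * M * G).trace = 0) : M * G = 0 := by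
  classical
  open scoped MatrixOrder Matrix.Norms.L2Operator in
  obtain ⟨B, rfl⟩ := CStarAlgebra.nonneg_iff_eq_star_mul_self.mp hM.nonneg
  rw [star_eq_conjTranspose, conjTranspose_mul_self_mul_eq_zero,
    ← trace_conjTranspose_mul_self_eq_zero_iff]
  simpa only [star_eq_conjTranspose, conjTranspose_mul, Matrix.mul_assoc] using h

section Compression

variable [DecidableEq m] [DecidableEq r] {P : Matrix m r 𝕜}

lemma trace_sub_trace_conjTranspose_mul_mul (U : Matrix m m 𝕜) (hP : Pᴴ * P = 1) :
    U.trace - (Pᴴ * U * P).trace = ((1 - P * Pᴴ)ᴴ * U * (1 - P * Pᴴ)).trace := by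
  have hE : (1 - P * Pᴴ)ᴴ = 1 - P * Pᴴ := by
    rw [conjTranspose_sub, conjTranspose_one, conjTranspose_mul, conjTranspose_conjTranspose]
  have hEE : (1 - P * Pᴴ) * (1 - P * Pᴴ) = 1 - P * Pᴴ := by
    have : P * Pᴴ * (P * Pᴴ) = P * Pᴴ := by
      rw [Matrix.mul_assoc, ← Matrix.mul_assoc Pᴴ, hP, Matrix.one_mul]
    simp only [Matrix.sub_mul, Matrix.mul_sub, Matrix.one_mul, Matrix.mul_one, this]
    abel
  rw [hE, trace_mul_cycle (1 - P * Pᴴ) U, hEE, Matrix.sub_mul, Matrix.one_mul, trace_sub,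
    trace_mul_cycle Pᴴ]

lemma PosSemidef.trace_conjTranspose_mul_mul_le {U : Matrix m m 𝕜} (hU : U.PosSemidef)
    (hP : Pᴴ * P = 1) : (Pᴴ * U * P).trace ≤ U.trace := by
  rw [← sub_nonneg, trace_sub_trace_conjTranspose_mul_mul U hP]
  exact (hU.conjTranspose_mul_mul_same _).trace_nonneg

lemma PosSemidef.mul_mul_conjTranspose_eq_of_trace_eq {U : Matrix m m 𝕜} (hU : U.PosSemidef)
    (hP : Pᴴ * P = 1) (h : U.trace = (Pᴴ * U * P).trace) : U * P * Pᴴ = U := by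
  have := hU.mul_eq_zero_of_trace_conjTranspose_mul_mul_eq_zero
    (by rw [← trace_sub_trace_conjTranspose_mul_mul U hP, h, sub_self])
  rw [Matrix.mul_sub, Matrix.mul_one, sub_eq_zero] at this
  rw [Matrix.mul_assoc, ← this]

end Compression

section BlockTrace

variable {P : Matrix m r 𝕜} {Q : Matrix n r 𝕜} {D : Matrix r r 𝕜} {U : Matrix m m 𝕜}
  {V : Matrix n n 𝕜}

lemma conjTranspose_fromRows_neg_mul_fromBlocks_mul [DecidableEq r] (hP : Pᴴ * P = 1)
    (hQ : Qᴴ * Q = 1) :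
    (fromRows P (-Q))ᴴ * fromBlocks U (P * D * Qᴴ) (P * D * Qᴴ)ᴴ V * fromRows P (-Q) =
      Pᴴ * U * P + Qᴴ * V * Q - (D + Dᴴ) := by
  rw [conjTranspose_fromRows_eq_fromCols_conjTranspose, fromCols_mul_fromBlocks,
    fromCols_mul_fromRows]
  simp only [conjTranspose_mul, conjTranspose_conjTranspose, conjTranspose_neg, Matrix.mul_assoc,
    ← Matrix.mul_assoc Pᴴ P, ← Matrix.mul_assoc Qᴴ Q, hP, hQ, Matrix.one_mul, Matrix.mul_one,
    Matrix.mul_neg, Matrix.neg_mul, Matrix.add_mul]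
  abel

lemma trace_add_trace_sub_eq_of_fromBlocks [DecidableEq r] (hP : Pᴴ * P = 1)
    (hQ : Qᴴ * Q = 1) :
    U.trace + V.trace - (D.trace + Dᴴ.trace) =
      (U.trace - (Pᴴ * U * P).trace) + (V.trace - (Qᴴ * V * Q).trace) +
        ((fromRows P (-Q))ᴴ * fromBlocks U (P * D * Qᴴ) (P * D * Qᴴ)ᴴ V *
          fromRows P (-Q)).trace := by
  rw [conjTranspose_fromRows_neg_mul_fromBlocks_mul hP hQ, trace_sub, trace_add, trace_add]
  abel

variable [DecidableEq m] [DecidableEq n] [DecidableEq r]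

theorem trace_add_trace_conjTranspose_le_of_posSemidef_fromBlocks (hP : Pᴴ * P = 1)
    (hQ : Qᴴ * Q = 1) (hM : (fromBlocks U (P * D * Qᴴ) (P * D * Qᴴ)ᴴ V).PosSemidef) :
    D.trace + Dᴴ.trace ≤ U.trace + V.trace := by
  rw [← sub_nonneg, trace_add_trace_sub_eq_of_fromBlocks hP hQ]
  exact add_nonneg (add_nonneg
    (sub_nonneg.2 ((hM.submatrix Sum.inl).trace_conjTranspose_mul_mul_le hP))
    (sub_nonneg.2 ((hM.submatrix Sum.inr).trace_conjTranspose_mul_mul_le hQ)))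
    (hM.conjTranspose_mul_mul_same _).trace_nonneg

theorem eq_of_posSemidef_fromBlocks_of_trace_eq (hP : Pᴴ * P = 1) (hQ : Qᴴ * Q = 1)
    (hM : (fromBlocks U (P * D * Qᴴ) (P * D * Qᴴ)ᴴ V).PosSemidef)
    (h : U.trace + V.trace = D.trace + Dᴴ.trace) :
    U = P * D * Pᴴ ∧ V = Q * Dᴴ * Qᴴ := by
  have hU : U.PosSemidef := hM.submatrix Sum.inl
  have hV : V.PosSemidef := hM.submatrix Sum.inr
  have hUgap := sub_nonneg.2 (hU.trace_conjTranspose_mul_mul_le hP)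
  have hVgap := sub_nonneg.2 (hV.trace_conjTranspose_mul_mul_le hQ)
  obtain ⟨hUVgap, hK⟩ := (add_eq_zero_iff_of_nonneg (add_nonneg hUgap hVgap)
    (hM.conjTranspose_mul_mul_same _).trace_nonneg).1
      (by rw [← trace_add_trace_sub_eq_of_fromBlocks hP hQ, h, sub_self])
  obtain ⟨hUtr, hVtr⟩ := (add_eq_zero_iff_of_nonneg hUgap hVgap).1 hUVgap
  have hMG := hM.mul_eq_zero_of_trace_conjTranspose_mul_mul_eq_zero hK
  rw [fromBlocks_mul_fromRows, ← fromRows_zero, fromRows_ext_iff] at hMG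
  obtain ⟨hUP, hVQ⟩ := hMG
  simp only [conjTranspose_mul, conjTranspose_conjTranspose, Matrix.mul_neg, Matrix.mul_assoc,
    hP, hQ, Matrix.mul_one, add_neg_eq_zero] at hUP hVQ
  constructor
  · rw [← hU.mul_mul_conjTranspose_eq_of_trace_eq hP (sub_eq_zero.1 hUtr), hUP]
  · rw [← hV.mul_mul_conjTranspose_eq_of_trace_eq hQ (sub_eq_zero.1 hVtr), ← hVQ]

end BlockTrace

end Matrix

/-- the matrix `Z̄ = [[PΣPᵀ, X̄],[X̄ᵀ, QΣQᵀ]]` built from a reduced SVD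
`X̄ = PΣQᵀ` is positive semidefinite of rank `r`, and `(PΣPᵀ, QΣQᵀ)` is the unique
minimizer of `(1/2)(tr U + tr V)` over symmetric pairs with `[[U, X̄],[X̄ᵀ, V]] ⪰ 0`. -/
theorem stmt10 (m n r : ℕ)
    (P : Matrix (Fin m) (Fin r) ℝ) (Q : Matrix (Fin n) (Fin r) ℝ)
    (σ : Fin r → ℝ) (hσ : ∀ i, 0 < σ i)
    (hP : Pᵀ * P = 1) (hQ : Qᵀ * Q = 1)
    (Xb : Matrix (Fin m) (Fin n) ℝ)
    (hX : Xb = P * Matrix.diagonal σ * Qᵀ) :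
    (Matrix.fromBlocks (P * Matrix.diagonal σ * Pᵀ) Xb Xbᵀ
        (Q * Matrix.diagonal σ * Qᵀ)).PosSemidef ∧
    (Matrix.fromBlocks (P * Matrix.diagonal σ * Pᵀ) Xb Xbᵀ
        (Q * Matrix.diagonal σ * Qᵀ)).rank = r ∧
    ∀ (U : Matrix (Fin m) (Fin m) ℝ) (V : Matrix (Fin n) (Fin n) ℝ),
      U.IsSymm → V.IsSymm → (Matrix.fromBlocks U Xb Xbᵀ V).PosSemidef →
      ((1/2) * ((P * Matrix.diagonal σ * Pᵀ).trace + (Q * Matrix.diagonal σ * Qᵀ).trace) ≤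
          (1/2) * (U.trace + V.trace) ∧
        ((1/2) * (U.trace + V.trace) =
            (1/2) * ((P * Matrix.diagonal σ * Pᵀ).trace + (Q * Matrix.diagonal σ * Qᵀ).trace) →
          U = P * Matrix.diagonal σ * Pᵀ ∧ V = Q * Matrix.diagonal σ * Qᵀ)) := by
  subst hX
  set D := diagonal σ
  have hD : Dᴴ = D := by simp [D, conjTranspose_eq_transpose_of_trivial]
  simp only [← conjTranspose_eq_transpose_of_trivial] at hP hQ ⊢
  rw [← fromRows_mul_mul_conjTranspose_fromRows hD]
  refine ⟨?_, ?_, fun U V _ _ hM => ?_⟩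
  · exact (posSemidef_diagonal_iff.2 fun i => (hσ i).le).mul_mul_conjTranspose_same _
  · rw [rank_mul_mul_of_mul_eq_one (L := fromCols Pᴴ 0) (R := fromRows P 0), rank_diagonal]
    · simp [(hσ _).ne']
    · rw [fromCols_mul_fromRows, hP, Matrix.zero_mul, add_zero]
    · rw [conjTranspose_fromRows_eq_fromCols_conjTranspose, fromCols_mul_fromRows, hP,
        Matrix.mul_zero, add_zero]
  have htrP : (P * D * Pᴴ).trace = D.trace := by rw [trace_mul_cycle, hP, Matrix.one_mul]
  have htrQ : (Q * D * Qᴴ).trace = D.trace := by rw [trace_mul_cycle, hQ, Matrix.one_mul]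
  have hle := trace_add_trace_conjTranspose_le_of_posSemidef_fromBlocks hP hQ hM
  rw [hD] at hle
  rw [htrP, htrQ]
  refine ⟨by linarith, fun h => ?_⟩
  simpa only [hD] using
    eq_of_posSemidef_fromBlocks_of_trace_eq hP hQ hM (by rw [hD]; linarith)
end

section
/- Let γ be a closed gauge on a finite-dimensional Hilbert space X, let ℓ : Y → ℝ be convex differentiable, A : X → Y linear, v ∈ X, and f(x) = ℓ(Ax) + ⟨v,x⟩ + γ(x). Suppose 0 ∈ ∂f(x̄) and γ(x̄) > 0. Then the polar gauge satisfies γ°(−A*∇ℓ(Ax̄) − v) = 1. -/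
/-!
Since `xb` minimises `ℓ ∘ A + ⟪v, ·⟫ + γ` and the smooth part has gradient `A†∇ℓ(A xb) + v`,
comparing values along the segment from `xb` towards any `z` (convexity of `γ`) and letting the
step tend to `0` shows that `w := -A†∇ℓ(A xb) - v` is a subgradient of `γ` at `xb`. For a gauge
this forces `⟪w, xb⟫ = γ xb`, hence `⟪w, z⟫ ≤ γ z` for every `z`, i.e. `γ°(w) ≤ 1`; and the point
`xb / γ xb` of the unit ball of `γ` attains `⟪w, ·⟫ = 1`.
-/

open Filter Topology

open Set InnerProductSpace
open scoped RealInnerProductSpace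

section

variable {E : Type*} [NormedAddCommGroup E] [InnerProductSpace ℝ E]

def IsSubgradient (h : E → EReal) (x w : E) : Prop :=
  ∀ z, h x + ((⟪w, z - x⟫ : ℝ) : EReal) ≤ h z

noncomputable def polarGauge (γ : E → EReal) (w : E) : EReal :=
  ⨆ z ∈ {z : E | γ z ≤ 1}, ((⟪w, z⟫ : ℝ) : EReal)

lemma ERealConvexOn.le_add_mul_sub {h : E → EReal} (hh : ERealConvexOn h) {x z : E} {s r : ℝ}
    (hx : h x = s) (hz : h z = r) {t : ℝ} (ht₀ : 0 ≤ t) (ht₁ : t ≤ 1) :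
    h (x + t • (z - x)) ≤ ((s + t * (r - s) : ℝ) : EReal) := by
  have hseg : x + t • (z - x) = (1 - t) • x + t • z := by module
  have hcomb : (((1 - t) * s + t * r : ℝ) : EReal) = ((s + t * (r - s) : ℝ) : EReal) := by
    congr 1; ring
  rw [hseg, ← hcomb, EReal.coe_add, EReal.coe_mul, EReal.coe_mul, ← hx, ← hz]
  exact hh x z (1 - t) t (by linarith) ht₀ (by ring)

lemma HasGradientAt.hasDerivAt_comp_line [CompleteSpace E] {g : E → ℝ} {g' x : E}
    (hg : HasGradientAt g g' x) (d : E) : HasDerivAt (fun t : ℝ => g (x + t • d)) ⟪g', d⟫ 0 := by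
  have hline : HasDerivAt (fun t : ℝ => x + t • d) d 0 :=
    ((hasDerivAt_id (0 : ℝ)).smul_const d).const_add x |>.congr_deriv (one_smul ℝ d)
  have hg0 : HasFDerivAt g (toDual ℝ E g') (x + (0 : ℝ) • d) := by
    simpa using hasGradientAt_iff_hasFDerivAt.mp hg
  simpa [Function.comp_def] using hg0.comp_hasDerivAt 0 hline

lemma HasDerivAt.le_of_eventually_mul_le_sub {φ : ℝ → ℝ} {φ' c : ℝ} (hφ : HasDerivAt φ φ' 0)
    (hc : ∀ᶠ t in 𝓝[>] (0 : ℝ), c * t ≤ φ t - φ 0) : c ≤ φ' := by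
  refine ge_of_tendsto hφ.tendsto_slope_zero_right ?_
  filter_upwards [hc, self_mem_nhdsWithin] with t ht (htpos : 0 < t)
  rw [zero_add, smul_eq_mul, inv_mul_eq_div, le_div_iff₀ htpos]
  exact ht

lemma IsMinOn.isSubgradient_neg_gradient [CompleteSpace E] {g : E → ℝ} {h : E → EReal}
    {g' x : E}
    (hmin : IsMinOn (fun z => (g z : EReal) + h z) univ x) (hg : HasGradientAt g g' x)
    (hh : ERealConvexOn h) (hx : h x ≠ ⊤) (hbot : ∀ z, h z ≠ ⊥) :
    IsSubgradient h x (-g') := by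
  intro z
  obtain ⟨s, hs⟩ : ∃ s : ℝ, h x = s := ⟨_, (EReal.coe_toReal hx (hbot x)).symm⟩
  rcases eq_or_ne (h z) ⊤ with hz | hz
  · rw [hz]; exact le_top
  obtain ⟨r, hr⟩ : ∃ r : ℝ, h z = r := ⟨_, (EReal.coe_toReal hz (hbot z)).symm⟩
  have hdescent : ∀ᶠ t in 𝓝[>] (0 : ℝ),
      (s - r) * t ≤ g (x + t • (z - x)) - g (x + (0 : ℝ) • (z - x)) := by
    filter_upwards [Ioc_mem_nhdsGT (zero_lt_one' ℝ)] with t ⟨ht₀, ht₁⟩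
    have hle := (isMinOn_univ_iff.mp hmin (x + t • (z - x))).trans
      (add_le_add le_rfl (hh.le_add_mul_sub hs hr ht₀.le ht₁))
    rw [hs, ← EReal.coe_add, ← EReal.coe_add, EReal.coe_le_coe_iff] at hle
    simp only [zero_smul, add_zero]
    nlinarith
  have hderiv := (hg.hasDerivAt_comp_line (z - x)).le_of_eventually_mul_le_sub hdescent
  rw [hs, hr, ← EReal.coe_add, EReal.coe_le_coe_iff, inner_neg_left]
  linarith

lemma IsSubgradient.inner_le {h : E → EReal} {x w : E} (hsub : IsSubgradient h x w)
    (hx : h x = ⟪w, x⟫) (z : E) : ((⟪w, z⟫ : ℝ) : EReal) ≤ h z := by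
  have := hsub z
  rwa [hx, ← EReal.coe_add, inner_sub_right, add_sub_cancel] at this

lemma IsSubgradient.inner_self_eq {γ : E → EReal} {x w : E} {s : ℝ} (hsub : IsSubgradient γ x w)
    (h0 : γ 0 = 0) (hhom : ∀ (t : ℝ) (x : E), 0 < t → γ (t • x) = (t : EReal) * γ x)
    (hx : γ x = s) : ⟪w, x⟫ = s := by
  have hzero := hsub 0
  have htwice := hsub ((2 : ℝ) • x)
  rw [h0, hx, ← EReal.coe_add, ← EReal.coe_zero, EReal.coe_le_coe_iff] at hzero
  rw [hhom 2 x two_pos, hx, ← EReal.coe_add, ← EReal.coe_mul, EReal.coe_le_coe_iff] at htwice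
  rw [zero_sub, inner_neg_right] at hzero
  rw [show (2 : ℝ) • x - x = x by module] at htwice
  linarith

lemma polarGauge_eq_one {γ : E → EReal} {w x : E} {s : ℝ}
    (hhom : ∀ (t : ℝ) (x : E), 0 < t → γ (t • x) = (t : EReal) * γ x)
    (hle : ∀ z, ((⟪w, z⟫ : ℝ) : EReal) ≤ γ z) (hx : γ x = s) (hs : 0 < s) (hwx : ⟪w, x⟫ = s) :
    polarGauge γ w = 1 := by
  refine le_antisymm (iSup₂_le fun z hz => (hle z).trans hz) ?_
  have hmem : γ (s⁻¹ • x) ≤ 1 := by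
    rw [hhom s⁻¹ x (inv_pos.2 hs), hx, ← EReal.coe_mul, inv_mul_cancel₀ hs.ne', EReal.coe_one]
  have hval : ((⟪w, s⁻¹ • x⟫ : ℝ) : EReal) = 1 := by
    rw [real_inner_smul_right, hwx, inv_mul_cancel₀ hs.ne', EReal.coe_one]
  exact hval ▸ le_iSup₂ (f := fun z (_ : z ∈ {z : E | γ z ≤ 1}) => ((⟪w, z⟫ : ℝ) : EReal))
    (s⁻¹ • x) hmem

end

lemma HasGradientAt.comp_clm_add_inner {X Y : Type*}
    [NormedAddCommGroup X] [InnerProductSpace ℝ X] [CompleteSpace X]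
    [NormedAddCommGroup Y] [InnerProductSpace ℝ Y] [CompleteSpace Y]
    {ℓ : Y → ℝ} {A : X →L[ℝ] Y} {x : X} {ℓ' : Y} (hℓ : HasGradientAt ℓ ℓ' (A x)) (v : X) :
    HasGradientAt (fun z => ℓ (A z) + ⟪v, z⟫) (ContinuousLinearMap.adjoint A ℓ' + v) x := by
  rw [hasGradientAt_iff_hasFDerivAt] at hℓ ⊢
  refine ((hℓ.comp x A.hasFDerivAt).add (innerSL ℝ v).hasFDerivAt).congr_fderiv ?_
  ext d
  simp [ContinuousLinearMap.adjoint_inner_left]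

theorem stmt11_general {X Y : Type*}
    [NormedAddCommGroup X] [InnerProductSpace ℝ X] [FiniteDimensional ℝ X]
    [NormedAddCommGroup Y] [InnerProductSpace ℝ Y] [FiniteDimensional ℝ Y]
    (γ : X → EReal)
    (hγ0 : γ 0 = 0) (hγnonneg : ∀ x, 0 ≤ γ x)
    (hγhom : ∀ (t : ℝ) (x : X), 0 < t → γ (t • x) = (t : EReal) * γ x)
    (hγconv : ERealConvexOn γ)
    (ℓ : Y → ℝ) (ℓ' : Y → Y)
    (hℓdiff : ∀ y, HasGradientAt ℓ (ℓ' y) y)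
    (A : X →L[ℝ] Y) (v : X) (xb : X)
    (hstat : (0 : X) ∈ {u : X |
      ∀ z : X, (((ℓ (A xb) + inner ℝ v xb : ℝ) : EReal) + γ xb) + ((inner ℝ u (z - xb) : ℝ) : EReal) ≤
        ((ℓ (A z) + inner ℝ v z : ℝ) : EReal) + γ z})
    (hpos : (0 : EReal) < γ xb) :
    (⨆ z ∈ {z : X | γ z ≤ 1},
        ((inner ℝ (-(ContinuousLinearMap.adjoint A (ℓ' (A xb))) - v) z : ℝ) : EReal)) = 1 := by
  have hmin : IsMinOn (fun z => ((ℓ (A z) + ⟪v, z⟫ : ℝ) : EReal) + γ z) univ xb :=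
    isMinOn_univ_iff.mpr fun z => by simpa using hstat z
  have hbot : ∀ z, γ z ≠ ⊥ := fun z => ne_bot_of_le_ne_bot EReal.zero_ne_bot (hγnonneg z)
  have htop : γ xb ≠ ⊤ := by
    have hfin := ne_top_of_le_ne_top (by simp [hγ0]) (isMinOn_univ_iff.mp hmin 0)
    exact (EReal.add_ne_top_iff_ne_top_right (EReal.coe_ne_bot _) (EReal.coe_ne_top _)).mp hfin
  obtain ⟨s, hs⟩ : ∃ s : ℝ, γ xb = s := ⟨_, (EReal.coe_toReal htop (hbot xb)).symm⟩
  have hsub := hmin.isSubgradient_neg_gradient ((hℓdiff (A xb)).comp_clm_add_inner v)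
    hγconv htop hbot
  rw [neg_add'] at hsub
  have hwx := hsub.inner_self_eq hγ0 hγhom hs
  exact polarGauge_eq_one hγhom (hsub.inner_le (by rw [hs, hwx])) hs
    (EReal.coe_pos.mp (hs ▸ hpos)) hwx

/-- for `f(x) = ℓ(Ax) + ⟨v,x⟩ + γ(x)` with `γ` a closed gauge, if
`0 ∈ ∂f(xb)` and `γ(xb) > 0`, then the polar gauge satisfies
`γ°(-A*∇ℓ(A xb) - v) = 1`. -/
theorem stmt11 {X Y : Type*}
    [NormedAddCommGroup X] [InnerProductSpace ℝ X] [FiniteDimensional ℝ X]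
    [NormedAddCommGroup Y] [InnerProductSpace ℝ Y] [FiniteDimensional ℝ Y]
    (γ : X → EReal)
    (hγ0 : γ 0 = 0) (hγnonneg : ∀ x, 0 ≤ γ x)
    (hγhom : ∀ (t : ℝ) (x : X), 0 < t → γ (t • x) = (t : EReal) * γ x)
    (hγconv : ERealConvexOn γ) (hγlsc : LowerSemicontinuous γ)
    (ℓ : Y → ℝ) (ℓ' : Y → Y)
    (hℓconv : ConvexOn ℝ Set.univ ℓ)
    (hℓdiff : ∀ y, HasGradientAt ℓ (ℓ' y) y)
    (A : X →L[ℝ] Y) (v : X) (xb : X)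
    (hstat : (0 : X) ∈ {u : X |
      ∀ z : X, (((ℓ (A xb) + inner ℝ v xb : ℝ) : EReal) + γ xb) + ((inner ℝ u (z - xb) : ℝ) : EReal) ≤
        ((ℓ (A z) + inner ℝ v z : ℝ) : EReal) + γ z})
    (hpos : (0 : EReal) < γ xb) :
    (⨆ z ∈ {z : X | γ z ≤ 1},
        ((inner ℝ (-(ContinuousLinearMap.adjoint A (ℓ' (A xb))) - v) z : ℝ) : EReal)) = 1 :=
  stmt11_general γ hγ0 hγnonneg hγhom hγconv ℓ ℓ' hℓdiff A v xb hstat hpos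
end

section
/- Fix integers m > k ≥ 1 and n ≥ 1. For X ∈ ℝ^{m×n}, rank(X) ≤ k if and only if there exists U ∈ ℝ^{m×(m−k)} with UᵀU = I_{m−k} and UᵀX = 0. Consequently, for a linear map A : ℝ^{m×n} → ℝ^p and b ∈ ℝ^p, the function f(X) = (1/2)‖AX − b‖² + δ_{{rank(·)≤k}}(X) satisfies f(X) = inf_U { (1/2)‖AX − b‖² + δ_{D̂}(X,U) }, where D̂ = {(X,U) : UᵀX = 0, UᵀU = I_{m−k}}. -/
/-!
If `UᴴU = 1` then `Uᴴ` has rank `m - k`, so `UᴴX = 0` puts the column space of `X` inside a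
kernel of dimension `k`. Conversely, the orthogonal complement of the column space of `X` has
dimension at least `m - k`, and an orthonormal family of `m - k` vectors in it gives the columns
of `U`. The indicator of `rank ≤ k` is then the infimum over `U` of the indicators of `D̂`.
-/

open Matrix

open Module in
theorem Submodule.exists_orthonormal_mem_orthogonal {𝕜 E ι : Type*} [RCLike 𝕜]
    [NormedAddCommGroup E] [InnerProductSpace 𝕜 E] [FiniteDimensional 𝕜 E] [Fintype ι]
    (K : Submodule 𝕜 E) (h : finrank 𝕜 K + Fintype.card ι ≤ finrank 𝕜 E) :
    ∃ v : ι → E, Orthonormal 𝕜 v ∧ ∀ i, v i ∈ Kᗮ := by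
  have hcard : Fintype.card ι ≤ Fintype.card (Fin (finrank 𝕜 Kᗮ)) := by
    have := K.finrank_add_finrank_orthogonal
    rw [Fintype.card_fin]
    omega
  obtain ⟨e⟩ := Function.Embedding.nonempty_of_card_le hcard
  let b := stdOrthonormalBasis 𝕜 Kᗮ
  exact ⟨fun i => b (e i),
    (b.orthonormal.comp e e.injective).comp_linearIsometry Kᗮ.subtypeₗᵢ, fun i => (b (e i)).2⟩

theorem iInf_ite_top {α ι : Type*} [CompleteLattice α] (p : ι → Prop) [DecidablePred p]
    [Decidable (∃ i, p i)] (a : α) :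
    (⨅ i, if p i then a else ⊤) = if ∃ i, p i then a else ⊤ := by
  simp only [← iInf_eq_if, iInf_exists]

namespace Matrix

theorem rank_eq_card_of_mul_eq_one {R l m : Type*} [CommSemiring R] [StrongRankCondition R]
    [Fintype l] [DecidableEq l] [Fintype m] {V : Matrix l m R} {U : Matrix m l R}
    (h : V * U = 1) : V.rank = Fintype.card l :=
  le_antisymm V.rank_le_card_height (rank_one (R := R) (n := l) ▸ h ▸ V.rank_mul_le_left U)

theorem rank_add_card_le_of_mul_eq_one_of_mul_eq_zero {K l m n : Type*} [Field K]
    [Fintype l] [DecidableEq l] [Fintype m] [Fintype n]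
    {V : Matrix l m K} {U : Matrix m l K} {X : Matrix m n K} (hVU : V * U = 1) (hVX : V * X = 0) :
    X.rank + Fintype.card l ≤ Fintype.card m := by
  rw [← rank_eq_card_of_mul_eq_one hVU, add_comm]
  exact rank_add_rank_le_card_of_mul_eq_zero hVX

variable {𝕜 m n r : Type*} [RCLike 𝕜]

theorem conjTranspose_mul_apply_eq_inner [Fintype m] (U : Matrix m r 𝕜) (W : Matrix m n 𝕜)
    (a : r) (j : n) :
    (Uᴴ * W) a j = inner 𝕜 (WithLp.toLp 2 (U.col a)) (WithLp.toLp 2 (W.col j)) := by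
  simp [mul_apply, EuclideanSpace.inner_toLp_toLp, dotProduct, mul_comm]

theorem finrank_span_toLp_col [Fintype n] (X : Matrix m n 𝕜) :
    Module.finrank 𝕜 (Submodule.span 𝕜 (Set.range fun j => WithLp.toLp 2 (X.col j))) =
      X.rank := by
  rw [rank_eq_finrank_span_cols, ← (WithLp.linearEquiv 2 𝕜 (m → 𝕜)).symm.finrank_map_eq,
    Submodule.map_span, ← Set.range_comp]
  rfl

theorem exists_conjTranspose_mul_self_eq_one_and_conjTranspose_mul_eq_zero [Fintype m]
    [Fintype n] [Fintype r] [DecidableEq r] (X : Matrix m n 𝕜)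
    (h : X.rank + Fintype.card r ≤ Fintype.card m) :
    ∃ U : Matrix m r 𝕜, Uᴴ * U = 1 ∧ Uᴴ * X = 0 := by
  set K := Submodule.span 𝕜 (Set.range fun j => WithLp.toLp 2 (X.col j))
  obtain ⟨v, hv, hvK⟩ := K.exists_orthonormal_mem_orthogonal (ι := r)
    (by rwa [finrank_span_toLp_col, finrank_euclideanSpace])
  refine ⟨of fun i a => v a i, ?_, ?_⟩
  · rw [← (gram_eq_one_iff_orthonormal (𝕜 := 𝕜)).2 hv]
    ext a b
    rw [conjTranspose_mul_apply_eq_inner]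
    rfl
  · ext a j
    rw [conjTranspose_mul_apply_eq_inner]
    exact K.inner_left_of_mem_orthogonal (Submodule.subset_span (Set.mem_range_self j)) (hvK a)

theorem rank_le_iff_exists_conjTranspose_mul_eq_zero {m n : ℕ} (k : ℕ)
    (X : Matrix (Fin m) (Fin n) 𝕜) :
    X.rank ≤ k ↔ ∃ U : Matrix (Fin m) (Fin (m - k)) 𝕜, Uᴴ * U = 1 ∧ Uᴴ * X = 0 := by
  constructor
  · intro hX
    have := X.rank_le_height
    exact exists_conjTranspose_mul_self_eq_one_and_conjTranspose_mul_eq_zero X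
      (by simp only [Fintype.card_fin]; omega)
  · rintro ⟨U, hU, hUX⟩
    have := rank_add_card_le_of_mul_eq_one_of_mul_eq_zero hU hUX
    simp only [Fintype.card_fin] at this
    omega

end Matrix

theorem stmt17_general (m k n p : ℕ)
    (A : Matrix (Fin m) (Fin n) ℝ →ₗ[ℝ] EuclideanSpace ℝ (Fin p))
    (b : EuclideanSpace ℝ (Fin p)) :
    (∀ X : Matrix (Fin m) (Fin n) ℝ,
      X.rank ≤ k ↔ ∃ U : Matrix (Fin m) (Fin (m - k)) ℝ, Uᵀ * U = 1 ∧ Uᵀ * X = 0) ∧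
    ∀ X : Matrix (Fin m) (Fin n) ℝ,
      (if X.rank ≤ k then (((1/2) * ‖A X - b‖ ^ 2 : ℝ) : EReal) else (⊤ : EReal)) =
        ⨅ U : Matrix (Fin m) (Fin (m - k)) ℝ,
          (if Uᵀ * U = 1 ∧ Uᵀ * X = 0 then (((1/2) * ‖A X - b‖ ^ 2 : ℝ) : EReal)
            else (⊤ : EReal)) := by
  have hrank (X : Matrix (Fin m) (Fin n) ℝ) :
      X.rank ≤ k ↔ ∃ U : Matrix (Fin m) (Fin (m - k)) ℝ, Uᵀ * U = 1 ∧ Uᵀ * X = 0 := by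
    simpa only [conjTranspose_eq_transpose_of_trivial] using
      rank_le_iff_exists_conjTranspose_mul_eq_zero k X
  refine ⟨hrank, fun X => ?_⟩
  classical
  rw [iInf_ite_top, ← hrank]
  congr

/-- `rank X ≤ k` iff there is `U` with orthonormal columns and `UᵀX = 0`;
consequently the rank-constrained least squares function is an inf-projection. -/
theorem stmt17 (m k n p : ℕ) (hk : 1 ≤ k) (hkm : k < m) (hn : 1 ≤ n)
    (A : Matrix (Fin m) (Fin n) ℝ →ₗ[ℝ] EuclideanSpace ℝ (Fin p))
    (b : EuclideanSpace ℝ (Fin p)) :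
    (∀ X : Matrix (Fin m) (Fin n) ℝ,
      X.rank ≤ k ↔ ∃ U : Matrix (Fin m) (Fin (m - k)) ℝ, Uᵀ * U = 1 ∧ Uᵀ * X = 0) ∧
    ∀ X : Matrix (Fin m) (Fin n) ℝ,
      (if X.rank ≤ k then (((1/2) * ‖A X - b‖ ^ 2 : ℝ) : EReal) else (⊤ : EReal)) =
        ⨅ U : Matrix (Fin m) (Fin (m - k)) ℝ,
          (if Uᵀ * U = 1 ∧ Uᵀ * X = 0 then (((1/2) * ‖A X - b‖ ^ 2 : ℝ) : EReal)
            else (⊤ : EReal)) :=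
  stmt17_general m k n p A b
end
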